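/- Let C ⊆ 𝔽_2^{24} be the extended binary Golay code, which contains the all-ones word. Then there exists a subset S of C containing exactly one codeword from each complementary pair {c, c + 𝟙} such that the sum over S of the codewords, viewed as integer vectors in ℤ^{24}, equals half of the sum over all of C of the codewords viewed as integer vectors. -/

import Mathlib

/-- Edge list of the icosahedron graph on 12 vertices: vertex 0 is a top
vertex, 1–5 the upper pentagon, 6–10 the lower pentagon, 11 the bottom vertex. -/
def icosEdges : List (Fin 12 × Fin 12) :=
  [(0,1),(0,2),(0,3),(0,4),(0,5),
   (1,2),(2,3),(3,4),(4,5),(5,1),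
   (11,6),(11,7),(11,8),(11,9),(11,10),
   (6,7),(7,8),(8,9),(9,10),(10,6),
   (1,6),(1,7),(2,7),(2,8),(3,8),(3,9),(4,9),(4,10),(5,10),(5,6)]

/-- Adjacency matrix of the icosahedron graph over `𝔽₂`. -/
def icosAdj : Matrix (Fin 12) (Fin 12) (ZMod 2) :=
  fun i j => if (i, j) ∈ icosEdges ∨ (j, i) ∈ icosEdges then 1 else 0

/-- `P = J - A` where `J` is the all-ones matrix and `A` the icosahedron
adjacency matrix. -/
def golayP : Matrix (Fin 12) (Fin 12) (ZMod 2) := fun i j => 1 - icosAdj i j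

/-- Generator matrix `G = [I | P]` of the extended binary Golay code; columns
are indexed by `Fin 12 ⊕ Fin 12`. -/
def golayG : Matrix (Fin 12) (Fin 12 ⊕ Fin 12) (ZMod 2) :=
  Matrix.fromCols 1 golayP

/-- The extended binary Golay code: the row span of `G = [I | P]`. -/
def golayCode : Finset ((Fin 12 ⊕ Fin 12) → ZMod 2) :=
  Finset.image (fun x : Fin 12 → ZMod 2 => Matrix.vecMul x golayG) Finset.univ

/-- A codeword viewed as a 0-1 integer vector in `ℤ^24`. -/
def intVec (c : (Fin 12 ⊕ Fin 12) → ZMod 2) : (Fin 12 ⊕ Fin 12) → ℤ :=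
  fun j => ((c j).val : ℤ)

/-! Split the code by a linear functional `φ` on messages with `φ 𝟙 = 1` and let `S` be the image
of `ker φ`, so that `c ∈ S ↔ c + 𝟙 ∉ S`. For every coordinate `j` some codeword `w` has `φ w = 1`
and `w j = 0`; translation by `w` exchanges the two cosets of `ker φ` without changing the `j`-th
coordinate, so both cosets contribute equally to the `j`-th coordinate of the sum over the code. -/

open Finset

theorem ZMod.add_one_eq_zero_iff_ne_zero_mod_two (a : ZMod 2) : a + 1 = 0 ↔ a ≠ 0 := by
  revert a; decide

section KernelCosets

variable {M A : Type*} [AddCommGroup M] [Fintype M] [AddCommMonoid A]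

theorem two_nsmul_sum_ker_eq_sum (φ : M →+ ZMod 2) (g : M → A) {v : M} (hv : φ v = 1)
    (hg : ∀ x, g (x + v) = g x) :
    2 • ∑ x ∈ univ.filter (fun x => φ x = 0), g x = ∑ x, g x := by
  have hswap : ∑ x ∈ univ.filter (fun x => ¬ φ x = 0), g x
      = ∑ x ∈ univ.filter (fun x => φ x = 0), g x :=
    sum_equiv (Equiv.addRight v)
      (fun x => by simp [map_add, hv, ZMod.add_one_eq_zero_iff_ne_zero_mod_two])
      (fun x _ => (hg x).symm)
  rw [← sum_filter_add_sum_filter_not univ (fun x => φ x = 0), hswap, two_nsmul]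

variable {N : Type*} [AddCommGroup N] [DecidableEq N]

def kerImage (E : M →+ N) (φ : M →+ ZMod 2) : Finset N :=
  (univ.filter fun x => φ x = 0).image E

theorem mem_kerImage_iff_add_notMem {E : M →+ N} (hE : Function.Injective E) (φ : M →+ ZMod 2)
    {u : M} (hu : φ u = 1) (x : M) :
    E x ∈ kerImage E φ ↔ E (x + u) ∉ kerImage E φ := by
  simp only [kerImage, hE.mem_finset_image, mem_filter, mem_univ, true_and]
  rw [map_add, hu, ZMod.add_one_eq_zero_iff_ne_zero_mod_two, not_not]

end KernelCosets

def golayEncode : (Fin 12 → ZMod 2) →+ (Fin 12 ⊕ Fin 12 → ZMod 2) :=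
  golayG.vecMulLinear.toAddMonoidHom

theorem golayEncode_inl (x : Fin 12 → ZMod 2) (i : Fin 12) : golayEncode x (.inl i) = x i := by
  simp [golayEncode, golayG, Matrix.vecMul_fromCols]

theorem golayEncode_injective : Function.Injective golayEncode := fun x y h =>
  funext fun i => by simpa only [golayEncode_inl] using congrFun h (.inl i)

theorem golayEncode_one : golayEncode 1 = 1 := by decide

theorem golayCode_eq_image : golayCode = univ.image golayEncode := rfl

/-- The rows `{0, 1, 2, 6, 11}` are odd in number, so `golaySplit 1 = 1`, and every vertex of the
icosahedron has a neighbour among them, so every column of `P = J - A` has a zero in one of them. -/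
def golaySplit : (Fin 12 → ZMod 2) →+ ZMod 2 where
  toFun x := x 0 + x 1 + x 2 + x 6 + x 11
  map_zero' := by simp
  map_add' x y := by simp only [Pi.add_apply]; ring

theorem golaySplit_one : golaySplit 1 = 1 := by decide

theorem exists_golaySplit_single_eq_one_golayG_eq_zero (j : Fin 12 ⊕ Fin 12) :
    ∃ k, golaySplit (Pi.single k 1) = 1 ∧ golayG k j = 0 := by
  revert j; decide

theorem exists_golaySplit_eq_one_golayEncode_eq_zero (j : Fin 12 ⊕ Fin 12) :
    ∃ v, golaySplit v = 1 ∧ golayEncode v j = 0 := by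
  obtain ⟨k, hk, hkj⟩ := exists_golaySplit_single_eq_one_golayG_eq_zero j
  exact ⟨Pi.single k 1, hk, by simpa [golayEncode, Matrix.single_one_vecMul] using hkj⟩

theorem stmt_11 :
    (1 : (Fin 12 ⊕ Fin 12) → ZMod 2) ∈ golayCode ∧
    ∃ S : Finset ((Fin 12 ⊕ Fin 12) → ZMod 2),
      (∀ c ∈ S, c ∈ golayCode) ∧
      (∀ c ∈ golayCode, (c ∈ S ↔ c + 1 ∉ S)) ∧
      2 • (∑ c ∈ S, intVec c) = ∑ c ∈ golayCode, intVec c := by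
  refine ⟨mem_image.mpr ⟨1, mem_univ _, golayEncode_one⟩, kerImage golayEncode golaySplit, ?_, ?_, ?_⟩
  · exact fun c hc => image_subset_image (filter_subset _ _) hc
  · rw [golayCode_eq_image]
    rintro _ hc
    obtain ⟨x, -, rfl⟩ := mem_image.mp hc
    rw [← golayEncode_one, ← map_add]
    exact mem_kerImage_iff_add_notMem golayEncode_injective golaySplit golaySplit_one x
  · funext j
    obtain ⟨v, hv, hvj⟩ := exists_golaySplit_eq_one_golayEncode_eq_zero j
    simp only [Pi.smul_apply, Finset.sum_apply, intVec, kerImage, golayCode_eq_image,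
      sum_image golayEncode_injective.injOn]
    exact two_nsmul_sum_ker_eq_sum golaySplit _ hv fun x => by
      simp only [map_add, Pi.add_apply, hvj, add_zero]
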